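/- Let q be a prime power, ℓ ≥ 2, and let B(x,y) = Σ_{i=1}^{2ℓ} x_i y_{2ℓ+1-i} on F_q^{2ℓ}. Suppose W ⊆ F_q^{2ℓ} is an ℓ-dimensional subspace on which B vanishes identically (B(v,w)=0 for all v,w ∈ W), and let A be an ℓ × 2ℓ matrix in reduced row echelon form whose row space is W, with pivot column set I. Then for every index x with 1 ≤ x ≤ 2ℓ, not both x ∈ I and 2ℓ+1-x ∈ I. -/
import Mathlib


theorem stmt_3 (q ℓ : ℕ) (hℓ : 2 ≤ ℓ) (F : Type) [Field F] [Fintype F]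
    (hq : Fintype.card F = q)
    (A : Matrix (Fin ℓ) (Fin (2 * ℓ)) F) (p : Fin ℓ → Fin (2 * ℓ))
    (hmono : StrictMono p)
    (hpiv1 : ∀ r, A r (p r) = 1)
    (hpiv0 : ∀ r c, c < p r → A r c = 0)
    (hcol : ∀ r r', r ≠ r' → A r (p r') = 0)
    (W : Submodule F (Fin (2 * ℓ) → F))
    (hW : W = Submodule.span F (Set.range A))
    (hiso : ∀ v ∈ W, ∀ w ∈ W, (∑ k : Fin (2 * ℓ), v k * w k.rev) = 0) :
    ∀ r s : Fin ℓ, (p r : ℕ) + (p s : ℕ) ≠ 2 * ℓ - 1 := by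
  intro r s h
  have hr : A r ∈ W := hW ▸ Submodule.subset_span ⟨r, rfl⟩
  have hs : A s ∈ W := hW ▸ Submodule.subset_span ⟨s, rfl⟩
  have h0 := hiso (A r) hr (A s) hs
  have hrev : (p r).rev = p s := by
    have h1 := (p r).is_lt
    have h2 := (p s).is_lt
    apply Fin.ext
    rw [Fin.val_rev]
    omega
  rw [Finset.sum_eq_single (p r)] at h0
  · rw [hpiv1 r, hrev, hpiv1 s, one_mul] at h0
    exact one_ne_zero h0
  · intro k _ hk
    rcases lt_trichotomy (k : ℕ) ((p r : Fin (2*ℓ)) : ℕ) with hlt | heq | hgt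
    · rw [hpiv0 r k hlt, zero_mul]
    · exact absurd (Fin.ext heq) hk
    · have : k.rev < p s := by
        have h1 := k.is_lt
        rw [Fin.lt_def, Fin.val_rev]
        omega
      rw [hpiv0 s k.rev this, mul_zero]
  · intro habs
    exact absurd (Finset.mem_univ _) habs
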